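/- arXiv:1112.4378 — 2 statements merged into one kernel-verified Lean document; each statement's English description precedes it below -/
import Mathlib

section
/- Let (X,ρ) be a metric space, let P be an abstract porosity on X, and let A ⊆ X be a set that is not σ-P-porous. Then the set A \ K_P(A) is σ-P-porous, where K_P(A) is the set of all x ∈ A at which A is not σ-P-porous. -/
open Metric Filter Set

/-- An abstract porosity on a metric space `X`: a relation between points and subsets
of `X` satisfying the axioms (A1), (A2), (A3). -/
structure AbstractPorosity (X : Type*) [MetricSpace X] where
  rel : X → Set X → Prop
  mono : ∀ (x : X) (A B : Set X), A ⊆ B → rel x B → rel x A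
  loc : ∀ (x : X) (A : Set X), rel x A ↔ ∃ r > 0, rel x (A ∩ Metric.ball x r)
  clos : ∀ (x : X) (A : Set X), rel x A ↔ rel x (closure A)

variable {X : Type*} [MetricSpace X]

/-- `A` is `P`-porous if `P(x,A)` holds at each point `x ∈ A`. -/
def AbstractPorosity.Porous (P : AbstractPorosity X) (A : Set X) : Prop :=
  ∀ x ∈ A, P.rel x A

/-- `A` is σ-`P`-porous if it is a countable union of `P`-porous sets. -/
def AbstractPorosity.SigmaPorous (P : AbstractPorosity X) (A : Set X) : Prop :=
  ∃ f : ℕ → Set X, (∀ n, P.Porous (f n)) ∧ A = ⋃ n, f n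

/-- `A` is σ-`P`-porous at `x` if some `A ∩ B(x,r)` (r>0) is σ-`P`-porous. -/
def AbstractPorosity.SigmaPorousAt (P : AbstractPorosity X) (A : Set X) (x : X) : Prop :=
  ∃ r > 0, P.SigmaPorous (A ∩ Metric.ball x r)

/-- The kernel `K_P(A)`: points of `A` at which `A` is not σ-`P`-porous. -/
def AbstractPorosity.kernel (P : AbstractPorosity X) (A : Set X) : Set X :=
  {x ∈ A | ¬ P.SigmaPorousAt A x}

/-! Every point of `A \ K_P(A)` has a ball in which `A` is σ-porous. These balls admit a
σ-uniformly discrete refinement, as in the proof that metric spaces are paracompact: order the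
balls well, and put a point `y` into the `n`-th layer of the first ball `U i` containing it as
soon as `B(y, 1/(n+1)) ⊆ U i`. Since porosity is a local property by (A2), the union of a
uniformly discrete family of porous sets is porous, so each layer is σ-porous, and hence so is
their countable union. -/

def UniformlyDiscreteFamily {ι : Type*} (s : ι → Set X) : Prop :=
  ∃ δ > 0, ∀ i j, ∀ x ∈ s i, ∀ y ∈ s j, dist x y < δ → i = j

theorem UniformlyDiscreteFamily.mono {ι : Type*} {s t : ι → Set X}
    (hs : UniformlyDiscreteFamily s) (hts : ∀ i, t i ⊆ s i) : UniformlyDiscreteFamily t := by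
  obtain ⟨δ, hδ, hsep⟩ := hs
  exact ⟨δ, hδ, fun i j x hx y hy => hsep i j x (hts i hx) y (hts j hy)⟩

theorem exists_uniformlyDiscreteFamily_refinement {ι : Type*} {B : Set X} {U : ι → Set X}
    (hU : ∀ i, IsOpen (U i)) (hB : B ⊆ ⋃ i, U i) :
    ∃ D : ℕ → ι → Set X, (∀ n i, D n i ⊆ U i) ∧ ⋃ n, ⋃ i, D n i = B ∧
      ∀ n, UniformlyDiscreteFamily (D n) := by
  obtain ⟨_, _⟩ := exists_wellFoundedLT ι
  choose ind hind using fun y : B => wellFounded_lt.has_min {i | (y : X) ∈ U i}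
    (mem_iUnion.1 (hB y.2))
  refine ⟨fun n i => {y | ∃ hy : y ∈ B, ind ⟨y, hy⟩ = i ∧ ball y (1 / (n + 1)) ⊆ U i},
    ?_, ?_, fun n => ⟨1 / (n + 1), Nat.one_div_pos_of_nat, ?_⟩⟩
  · rintro n i y ⟨-, -, hball⟩
    exact hball (mem_ball_self Nat.one_div_pos_of_nat)
  · refine Subset.antisymm (iUnion₂_subset fun n i y ⟨hy, _⟩ => hy) fun y hy => ?_
    obtain ⟨ε, hε, hεU⟩ := Metric.isOpen_iff.1 (hU (ind ⟨y, hy⟩)) y (hind ⟨y, hy⟩).1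
    obtain ⟨n, hn⟩ := exists_nat_one_div_lt hε
    exact mem_iUnion₂.2 ⟨n, ind ⟨y, hy⟩, hy, rfl, (ball_subset_ball hn.le).trans hεU⟩
  · -- Whichever of `i ≠ j` is smaller, the ball around one point puts the other point into
    -- an earlier member of the cover than its own.
    rintro i j x ⟨hx, rfl, hxU⟩ y ⟨hy, rfl, hyU⟩ hxy
    rcases lt_trichotomy (ind ⟨x, hx⟩) (ind ⟨y, hy⟩) with hlt | heq | hgt
    · exact absurd hlt ((hind ⟨y, hy⟩).2 _ (hxU (mem_ball'.2 hxy)))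
    · exact heq
    · exact absurd hgt ((hind ⟨x, hx⟩).2 _ (hyU (mem_ball.2 hxy)))

namespace AbstractPorosity

variable {P : AbstractPorosity X}

theorem Porous.mono {A B : Set X} (hA : P.Porous A) (hBA : B ⊆ A) : P.Porous B :=
  fun x hx => P.mono x B A hBA (hA x (hBA hx))

theorem SigmaPorous.mono {A B : Set X} (hA : P.SigmaPorous A) (hBA : B ⊆ A) :
    P.SigmaPorous B := by
  obtain ⟨f, hf, rfl⟩ := hA
  refine ⟨fun n => f n ∩ B, fun n => (hf n).mono inter_subset_left, ?_⟩
  rw [← iUnion_inter, inter_eq_right.2 hBA]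

theorem SigmaPorous.iUnion {s : ℕ → Set X} (hs : ∀ n, P.SigmaPorous (s n)) :
    P.SigmaPorous (⋃ n, s n) := by
  choose f hf hfs using hs
  refine ⟨fun m => f m.unpair.1 m.unpair.2, fun m => hf _ _, ?_⟩
  rw [Set.iUnion_unpair f]
  exact iUnion_congr hfs

theorem Porous.iUnion_of_uniformlyDiscreteFamily {ι : Type*} {s : ι → Set X}
    (hs : ∀ i, P.Porous (s i)) (hsep : UniformlyDiscreteFamily s) : P.Porous (⋃ i, s i) := by
  obtain ⟨δ, hδ, hsep⟩ := hsep
  intro x hx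
  obtain ⟨i, hxi⟩ := mem_iUnion.1 hx
  obtain ⟨ρ, hρ, hxρ⟩ := (P.loc x (s i)).1 (hs i x hxi)
  have hnear : (⋃ j, s j) ∩ ball x (min ρ δ) ⊆ s i ∩ ball x ρ := by
    rintro y ⟨hy, hyx⟩
    obtain ⟨j, hyj⟩ := mem_iUnion.1 hy
    have hxy : dist x y < δ := (mem_ball'.1 hyx).trans_le (min_le_right _ _)
    obtain rfl := hsep i j x hxi y hyj hxy
    exact ⟨hyj, ball_subset_ball (min_le_left _ _) hyx⟩
  exact (P.loc x _).2 ⟨min ρ δ, lt_min hρ hδ, P.mono x _ _ hnear hxρ⟩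

theorem SigmaPorous.iUnion_of_uniformlyDiscreteFamily {ι : Type*} {s : ι → Set X}
    (hs : ∀ i, P.SigmaPorous (s i)) (hsep : UniformlyDiscreteFamily s) :
    P.SigmaPorous (⋃ i, s i) := by
  choose f hf hfs using hs
  refine ⟨fun n => ⋃ i, f i n, fun n => ?_, ?_⟩
  · refine Porous.iUnion_of_uniformlyDiscreteFamily (fun i => hf i n) (hsep.mono fun i => ?_)
    rw [hfs i]
    exact subset_iUnion (f i) n
  · rw [iUnion_comm]
    exact iUnion_congr hfs

end AbstractPorosity

theorem sigmaPorous_diff_kernel_general {X : Type*} [MetricSpace X]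
    (P : AbstractPorosity X) (A : Set X) :
    P.SigmaPorous (A \ P.kernel A) := by
  set B := A \ P.kernel A
  have hlocal : ∀ x : B, ∃ r > 0, P.SigmaPorous (A ∩ ball (x : X) r) := fun x =>
    not_not.1 (fun h => x.2.2 ⟨x.2.1, h⟩)
  choose r hr hrA using hlocal
  obtain ⟨D, hDU, hDB, hDsep⟩ := exists_uniformlyDiscreteFamily_refinement
    (U := fun x : B => ball (x : X) (r x)) (fun _ => isOpen_ball)
    (fun x hx => mem_iUnion.2 ⟨⟨x, hx⟩, mem_ball_self (hr _)⟩)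
  have hDA : ∀ n x, D n x ⊆ A := fun n x =>
    ((subset_iUnion₂ (s := fun n x => D n x) n x).trans hDB.subset).trans sdiff_subset
  rw [← hDB]
  exact .iUnion fun n => .iUnion_of_uniformlyDiscreteFamily
    (fun x => (hrA x).mono (subset_inter (hDA n x) (hDU n x))) (hDsep n)

/-- If `A` is not σ-`P`-porous, then `A \ K_P(A)` is σ-`P`-porous. -/
theorem sigmaPorous_diff_kernel {X : Type*} [MetricSpace X]
    (P : AbstractPorosity X) (A : Set X) (hA : ¬ P.SigmaPorous A) :
    P.SigmaPorous (A \ P.kernel A) :=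
  sigmaPorous_diff_kernel_general P A
end

section
/- There exist closed sets A ⊆ ℝ and B ⊆ ℝ such that neither A nor B is σ-lower porous in ℝ, yet the Cartesian product A × B is lower porous in ℝ² equipped with the maximum metric. -/
open Metric Filter Set

/-- γ(x,R,M): the supremum of radii r>0 of open balls contained in B(x,R) \ M
(equal to 0 if no such ball exists, by `Real.sSup_empty`). -/
noncomputable def porGamma {X : Type*} [MetricSpace X] (x : X) (R : ℝ) (M : Set X) : ℝ :=
  sSup {r : ℝ | 0 < r ∧ ∃ z : X, Metric.ball z r ⊆ Metric.ball x R \ M}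

/-- `M` is lower porous at `x`: liminf_{R→0+} 2γ(x,R,M)/R > 0. -/
def LowerPorousAt {X : Type*} [MetricSpace X] (M : Set X) (x : X) : Prop :=
  0 < Filter.liminf (fun R => 2 * porGamma x R M / R) (nhdsWithin 0 (Set.Ioi 0))

/-- `M` is (upper) porous at `x`: limsup_{R→0+} 2γ(x,R,M)/R > 0. -/
def UpperPorousAt {X : Type*} [MetricSpace X] (M : Set X) (x : X) : Prop :=
  0 < Filter.limsup (fun R => 2 * porGamma x R M / R) (nhdsWithin 0 (Set.Ioi 0))

/-- A set is lower porous if it is lower porous at each of its points. -/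
def LowerPorous {X : Type*} [MetricSpace X] (M : Set X) : Prop :=
  ∀ x ∈ M, LowerPorousAt M x

/-- A set is (upper) porous if it is porous at each of its points. -/
def UpperPorous {X : Type*} [MetricSpace X] (M : Set X) : Prop :=
  ∀ x ∈ M, UpperPorousAt M x

/-- A set is σ-lower porous if it is a countable union of lower porous sets. -/
def SigmaLowerPorous {X : Type*} [MetricSpace X] (A : Set X) : Prop :=
  ∃ f : ℕ → Set X, (∀ n, LowerPorous (f n)) ∧ A = ⋃ n, f n

/-- A set is σ-(upper) porous if it is a countable union of porous sets. -/
def SigmaUpperPorous {X : Type*} [MetricSpace X] (A : Set X) : Prop :=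
  ∃ f : ℕ → Set X, (∀ n, UpperPorous (f n)) ∧ A = ⋃ n, f n

/-!
For `t : ℕ → Bool`, `maskedCantorSet t` is the set of numbers `∑ dⱼ 2^(-j-1)` whose binary
digits `dⱼ` vanish wherever `t j` is false. Take for `A` and `B` the masks supported on the even,
resp. odd, dyadic blocks `[2^k - 1, 2^(k+1) - 1)`.

At every scale `2^(-j)` one of `A`, `B` has its `j`-th digit forced to vanish, hence a gap of
length `2^(-j-1)` within distance `2^(-j)` of each of its points, and this gap yields a hole of
comparable size in `A × B`.

On the other hand, a long block of free digits makes `A`, near any of its points, a fine net of a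
whole dyadic interval, so no uniformly lower porous set contains a relatively open part of `A`.
A lower porous set is a countable union of uniformly lower porous sets, whose closures are still
uniformly lower porous, so Baire's theorem in the closed set `A` (and likewise `B`) rules out
σ-lower porosity.
-/

open Topology

section Porosity

variable {X : Type*} [MetricSpace X]

def LowerPorousAtWith (M : Set X) (x : X) (c δ : ℝ) : Prop :=
  ∀ R, 0 < R → R < δ → ∃ z, ball z (c * R) ⊆ ball x R \ M

def LowerPorousWith (c δ : ℝ) (S : Set X) : Prop :=
  ∀ x ∈ S, LowerPorousAtWith S x c δ

lemma LowerPorousAtWith.mono {M N : Set X} {x : X} {c c' δ δ' : ℝ}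
    (h : LowerPorousAtWith M x c δ) (hNM : N ⊆ M) (hc : c' ≤ c) (hδ : δ' ≤ δ) :
    LowerPorousAtWith N x c' δ' := by
  intro R hR hRδ
  obtain ⟨z, hz⟩ := h R hR (hRδ.trans_le hδ)
  exact ⟨z, (ball_subset_ball (mul_le_mul_of_nonneg_right hc hR.le)).trans
    (hz.trans (sdiff_subset_sdiff_right hNM))⟩

lemma porGamma_nonneg (x : X) (R : ℝ) (M : Set X) : 0 ≤ porGamma x R M :=
  Real.sSup_nonneg fun _ hr => hr.1.le

lemma LowerPorousAt.exists_lowerPorousAtWith {M : Set X} {x : X} (h : LowerPorousAt M x) :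
    ∃ c > 0, ∃ δ > 0, LowerPorousAtWith M x c δ := by
  set ℓ := liminf (fun R => 2 * porGamma x R M / R) (𝓝[>] 0)
  have hℓ : 0 < ℓ := h
  have hbdd : IsBoundedUnder (· ≥ ·) (𝓝[>] 0) (fun R => 2 * porGamma x R M / R) :=
    ⟨0, eventually_map.2 <| eventually_mem_nhdsWithin.mono fun R (hR : 0 < R) => by
      have := porGamma_nonneg x R M; positivity⟩
  obtain ⟨δ, hδ, hδℓ⟩ :=
    (nhdsGT_basis 0).eventually_iff.1 (eventually_lt_of_lt_liminf (half_lt_self hℓ) hbdd)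
  refine ⟨ℓ / 4, by positivity, δ, hδ, fun R hR hRδ => ?_⟩
  have hγ : ℓ / 4 * R < porGamma x R M := by
    have := hδℓ ⟨hR, hRδ⟩
    rw [lt_div_iff₀ hR] at this
    linarith
  have hne : {r : ℝ | 0 < r ∧ ∃ z, ball z r ⊆ ball x R \ M}.Nonempty := by
    by_contra hempty
    rw [not_nonempty_iff_eq_empty] at hempty
    have : porGamma x R M = 0 := by rw [porGamma, hempty, Real.sSup_empty]
    have : 0 < ℓ / 4 * R := by positivity
    linarith
  obtain ⟨r, ⟨-, z, hz⟩, hr⟩ := exists_lt_of_lt_csSup hne hγ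
  exact ⟨z, (ball_subset_ball hr.le).trans hz⟩

def lowerPorousPiece (M : Set X) (k : ℕ) : Set X :=
  {x ∈ M | LowerPorousAtWith M x ((k : ℝ) + 1)⁻¹ ((k : ℝ) + 1)⁻¹}

lemma LowerPorous.subset_iUnion_lowerPorousPiece {M : Set X} (h : LowerPorous M) :
    M ⊆ ⋃ k, lowerPorousPiece M k := by
  intro x hx
  obtain ⟨c, hc, δ, hδ, hcδ⟩ := (h x hx).exists_lowerPorousAtWith
  obtain ⟨k, hk⟩ := exists_nat_one_div_lt (lt_min hc hδ)
  rw [one_div] at hk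
  exact mem_iUnion.2 ⟨k, hx, hcδ.mono subset_rfl (hk.le.trans (min_le_left _ _))
    (hk.le.trans (min_le_right _ _))⟩

lemma lowerPorousWith_lowerPorousPiece (M : Set X) (k : ℕ) :
    LowerPorousWith ((k : ℝ) + 1)⁻¹ ((k : ℝ) + 1)⁻¹ (lowerPorousPiece M k) :=
  fun _ hx => hx.2.mono (sep_subset _ _) le_rfl le_rfl

lemma LowerPorousWith.closure {S : Set X} {c δ : ℝ} (h : LowerPorousWith c δ S) :
    LowerPorousWith (c / 2) δ (_root_.closure S) := by
  intro x hx R hR hRδ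
  obtain ⟨s, hs, hxs⟩ := Metric.mem_closure_iff.1 hx (R / 2) (half_pos hR)
  obtain ⟨z, hz⟩ := h s hs (R / 2) (half_pos hR) (by linarith)
  have hsub : ball s (R / 2) ⊆ ball x R :=
    ball_subset_ball' (by rw [dist_comm]; linarith)
  have hdisj : Disjoint (ball z (c * (R / 2))) (_root_.closure S) :=
    (disjoint_sdiff_left.mono_left hz).closure_right isOpen_ball
  rw [div_mul_eq_mul_div, mul_div_assoc]
  exact ⟨z, subset_sdiff.2 ⟨hz.trans (sdiff_subset.trans hsub), hdisj⟩⟩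

lemma IsClosed.exists_inter_ball_subset_of_subset_iUnion [CompleteSpace X] {ι : Type*}
    [Countable ι] {A : Set X} (hA : IsClosed A) (hne : A.Nonempty) {F : ι → Set X}
    (hF : ∀ i, IsClosed (F i)) (hAF : A ⊆ ⋃ i, F i) :
    ∃ i, ∃ a ∈ A, ∃ r > 0, A ∩ ball a r ⊆ F i := by
  have := hA.completeSpace_coe
  have := hne.to_subtype
  obtain ⟨i, a, ha⟩ := nonempty_interior_of_iUnion_of_closed
    (f := fun i => ((↑) : A → X) ⁻¹' F i) (fun i => (hF i).preimage continuous_subtype_val)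
    (eq_univ_of_forall fun x => by simpa using hAF x.2)
  obtain ⟨r, hr, hball⟩ := Metric.mem_nhds_iff.1 (mem_interior_iff_mem_nhds.1 ha)
  exact ⟨i, a, a.2, r, hr, fun y ⟨hyA, hy⟩ => hball (show (⟨y, hyA⟩ : A) ∈ ball a r from hy)⟩

theorem not_sigmaLowerPorous_of_forall_not_lowerPorousWith [CompleteSpace X] {A : Set X}
    (hA : IsClosed A) (hne : A.Nonempty)
    (h : ∀ a ∈ A, ∀ r > 0, ∀ c > 0, ∀ δ > 0, ∀ S, A ∩ ball a r ⊆ S → ¬ LowerPorousWith c δ S) :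
    ¬ SigmaLowerPorous A := by
  rintro ⟨f, hf, rfl⟩
  have hcover : (⋃ n, f n) ⊆ ⋃ i : ℕ × ℕ, closure (lowerPorousPiece (f i.1) i.2) := by
    refine iUnion_subset fun n x hx => ?_
    obtain ⟨k, hk⟩ := mem_iUnion.1 ((hf n).subset_iUnion_lowerPorousPiece hx)
    exact mem_iUnion.2 ⟨(n, k), subset_closure hk⟩
  obtain ⟨⟨n, k⟩, a, ha, r, hr, har⟩ := hA.exists_inter_ball_subset_of_subset_iUnion hne
    (fun _ => isClosed_closure) hcover
  exact h a ha r hr _ (by positivity) _ (by positivity) _ har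
    (lowerPorousWith_lowerPorousPiece (f n) k).closure

end Porosity

section NormedSpace

variable {E : Type*} [NormedAddCommGroup E] [NormedSpace ℝ E] [Nontrivial E]

lemma le_of_ball_subset_ball {z x : E} {r R : ℝ} (hr : 0 < r) (h : ball z r ⊆ ball x R) :
    r ≤ R := by
  have hR : 0 ≤ R := (dist_nonneg.trans_lt (h (mem_ball_self hr))).le
  have := diam_mono h isBounded_ball
  rw [diam_ball_eq z hr.le, diam_ball_eq x hR] at this
  linarith

lemma porGamma_le (x : E) (M : Set E) {R : ℝ} (hR : 0 ≤ R) : porGamma x R M ≤ R :=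
  Real.sSup_le (fun _ ⟨hr, _, hz⟩ => le_of_ball_subset_ball hr (hz.trans sdiff_subset)) hR

lemma le_porGamma {M : Set E} {x z : E} {r R : ℝ} (hr : 0 < r) (h : ball z r ⊆ ball x R \ M) :
    r ≤ porGamma x R M :=
  le_csSup ⟨R, fun _ ⟨hs, _, hz⟩ => le_of_ball_subset_ball hs (hz.trans sdiff_subset)⟩
    ⟨hr, z, h⟩

lemma LowerPorousAtWith.lowerPorousAt {M : Set E} {x : E} {c δ : ℝ}
    (h : LowerPorousAtWith M x c δ) (hc : 0 < c) (hδ : 0 < δ) : LowerPorousAt M x := by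
  have hlower : ∀ᶠ R in 𝓝[>] (0 : ℝ), 2 * c ≤ 2 * porGamma x R M / R := by
    filter_upwards [Ioo_mem_nhdsGT hδ] with R ⟨hR, hRδ⟩
    obtain ⟨z, hz⟩ := h R hR hRδ
    rw [le_div_iff₀ hR, mul_assoc]
    gcongr
    exact le_porGamma (by positivity) hz
  have hupper : ∀ᶠ R in 𝓝[>] (0 : ℝ), 2 * porGamma x R M / R ≤ 2 := by
    filter_upwards [self_mem_nhdsWithin] with R (hR : 0 < R)
    rw [div_le_iff₀ hR]
    linarith [porGamma_le x M hR.le]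
  exact (by positivity : (0 : ℝ) < 2 * c).trans_le
    (le_liminf_of_le (isCoboundedUnder_ge_of_eventually_le _ hupper) hlower)

end NormedSpace

section Product

variable {X Y : Type*} [PseudoMetricSpace X] [PseudoMetricSpace Y]

lemma ball_prod_subset_sdiff_prod_left {A : Set X} (B : Set Y) {z a : X} (b : Y) {r R : ℝ}
    (hrR : r ≤ R) (h : ball z r ⊆ ball a R \ A) : ball (z, b) r ⊆ ball (a, b) R \ A ×ˢ B := by
  rw [← ball_prod_same, ← ball_prod_same]
  rintro ⟨y₁, y₂⟩ ⟨hy₁, hy₂⟩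
  exact ⟨⟨(h hy₁).1, ball_subset_ball hrR hy₂⟩, fun hy => (h hy₁).2 hy.1⟩

lemma ball_prod_subset_sdiff_prod_right (A : Set X) {B : Set Y} (a : X) {z b : Y} {r R : ℝ}
    (hrR : r ≤ R) (h : ball z r ⊆ ball b R \ B) : ball (a, z) r ⊆ ball (a, b) R \ A ×ˢ B := by
  rw [← ball_prod_same, ← ball_prod_same]
  rintro ⟨y₁, y₂⟩ ⟨hy₁, hy₂⟩
  exact ⟨⟨ball_subset_ball hrR hy₁, (h hy₂).1⟩, fun hy => (h hy₂).2 hy.2⟩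

end Product

section MaskedCantor

variable (t : ℕ → Bool)

noncomputable def maskedTerm (ε : ℕ → Bool) (j : ℕ) : ℝ :=
  if t j && ε j then (1 / 2) ^ (j + 1) else 0

noncomputable def maskedSum (ε : ℕ → Bool) : ℝ := ∑' j, maskedTerm t ε j

noncomputable def maskedPartialSum (ε : ℕ → Bool) (n : ℕ) : ℝ :=
  ∑ j ∈ Finset.range n, maskedTerm t ε j

def maskedCantorSet : Set ℝ := range (maskedSum t)

variable {t}

lemma maskedTerm_nonneg (ε : ℕ → Bool) (j : ℕ) : 0 ≤ maskedTerm t ε j := by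
  unfold maskedTerm; split_ifs <;> positivity

lemma maskedTerm_le (ε : ℕ → Bool) (j : ℕ) : maskedTerm t ε j ≤ (1 / 2) ^ (j + 1) := by
  unfold maskedTerm; split_ifs
  exacts [le_rfl, by positivity]

lemma summable_maskedTerm (ε : ℕ → Bool) : Summable (maskedTerm t ε) :=
  .of_nonneg_of_le (maskedTerm_nonneg ε) (maskedTerm_le ε)
    ((summable_nat_add_iff 1).2 summable_geometric_two)

lemma tsum_half_pow_add (n : ℕ) : ∑' i : ℕ, (1 / 2 : ℝ) ^ (i + n + 1) = (1 / 2) ^ n := by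
  simp_rw [pow_add, tsum_mul_right, tsum_geometric_two]
  ring

lemma maskedSum_mem_Icc (ε : ℕ → Bool) (n : ℕ) :
    maskedSum t ε ∈ Icc (maskedPartialSum t ε n) (maskedPartialSum t ε n + (1 / 2) ^ n) := by
  rw [maskedSum, maskedPartialSum, ← (summable_maskedTerm ε).sum_add_tsum_nat_add n]
  have hsummable := (summable_nat_add_iff n).2 (summable_maskedTerm (t := t) ε)
  refine ⟨le_add_of_nonneg_right (tsum_nonneg fun i => maskedTerm_nonneg ε _),
    add_le_add_right ?_ _⟩
  rw [← tsum_half_pow_add n]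
  exact hsummable.tsum_le_tsum (fun i => maskedTerm_le ε _)
    ((summable_nat_add_iff (n + 1)).2 summable_geometric_two)

lemma maskedPartialSum_congr {ε ε' : ℕ → Bool} {n : ℕ} (h : ∀ j < n, ε' j = ε j) :
    maskedPartialSum t ε' n = maskedPartialSum t ε n :=
  Finset.sum_congr rfl fun j hj => by rw [maskedTerm, maskedTerm, h j (Finset.mem_range.1 hj)]

lemma dist_maskedSum_le {ε ε' : ℕ → Bool} {n : ℕ} (h : ∀ j < n, ε' j = ε j) :
    dist (maskedSum t ε') (maskedSum t ε) ≤ (1 / 2) ^ n := by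
  have hε' := maskedSum_mem_Icc (t := t) ε' n
  have hε := maskedSum_mem_Icc (t := t) ε n
  rw [maskedPartialSum_congr h] at hε'
  rw [Real.dist_eq, abs_sub_le_iff]
  constructor <;> linarith [hε.1, hε.2, hε'.1, hε'.2]

lemma exists_maskedPartialSum_eq_natCast_mul (ε : ℕ → Bool) (n : ℕ) :
    ∃ q : ℕ, maskedPartialSum t ε n = q * (1 / 2) ^ n := by
  induction n with
  | zero => exact ⟨0, by simp [maskedPartialSum]⟩
  | succ n ih =>
    obtain ⟨q, hq⟩ := ih
    rw [maskedPartialSum, Finset.sum_range_succ, ← maskedPartialSum, hq, maskedTerm]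
    split_ifs
    · exact ⟨2 * q + 1, by push_cast; ring⟩
    · exact ⟨2 * q, by push_cast; ring⟩

lemma isClosed_maskedCantorSet (t : ℕ → Bool) : IsClosed (maskedCantorSet t) := by
  have hcont : Continuous (maskedSum t) := by
    refine continuous_tsum (fun j => ?_) ((summable_nat_add_iff 1).2 summable_geometric_two)
      (fun j ε => ?_)
    · exact (continuous_of_discreteTopology (f := fun b : Bool =>
        if t j && b then (1 / 2 : ℝ) ^ (j + 1) else 0)).comp (continuous_apply j)
    · rw [Real.norm_of_nonneg (maskedTerm_nonneg ε j)]
      exact maskedTerm_le ε j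
  exact (isCompact_range hcont).isClosed

lemma exists_mem_Icc_of_eq_false {j : ℕ} (hj : t j = false) {x : ℝ}
    (hx : x ∈ maskedCantorSet t) :
    ∃ q : ℕ, x ∈ Icc ((q : ℝ) * (1 / 2) ^ j) (q * (1 / 2) ^ j + (1 / 2) ^ (j + 1)) := by
  obtain ⟨ε, rfl⟩ := hx
  obtain ⟨q, hq⟩ := exists_maskedPartialSum_eq_natCast_mul (t := t) ε j
  refine ⟨q, ?_⟩
  have := maskedSum_mem_Icc (t := t) ε (j + 1)
  rwa [maskedPartialSum, Finset.sum_range_succ, ← maskedPartialSum, hq, maskedTerm, hj,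
    Bool.false_and, if_neg Bool.false_ne_true, add_zero] at this

lemma exists_ball_subset_sdiff_maskedCantorSet {j : ℕ} (hj : t j = false) {a R : ℝ}
    (ha : a ∈ maskedCantorSet t) (hR : (1 / 2) ^ j ≤ R) :
    ∃ z, ball z ((1 / 2) ^ (j + 2)) ⊆ ball a R \ maskedCantorSet t := by
  obtain ⟨q, hqa⟩ := exists_mem_Icc_of_eq_false hj ha
  set u : ℝ := (1 / 2) ^ j
  have hu : 0 < u := by positivity
  have hu1 : (1 / 2 : ℝ) ^ (j + 1) = u / 2 := by rw [pow_succ]; ring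
  have hu2 : (1 / 2 : ℝ) ^ (j + 2) = u / 4 := by rw [pow_add]; ring
  rw [hu1] at hqa
  refine ⟨q * u + 3 * u / 4, fun y hy => ?_⟩
  rw [hu2, Real.ball_eq_Ioo, mem_Ioo] at hy
  refine ⟨?_, fun hyA => ?_⟩
  · rw [Real.ball_eq_Ioo, mem_Ioo]
    constructor <;> linarith [hqa.1, hqa.2]
  · obtain ⟨q', hq'y⟩ := exists_mem_Icc_of_eq_false hj hyA
    rw [hu1] at hq'y
    have hqq' : (q : ℝ) < q' := lt_of_mul_lt_mul_right (by linarith [hq'y.2]) hu.le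
    have hqq'1 : (q : ℝ) + 1 ≤ q' := by exact_mod_cast Nat.cast_lt.1 hqq'
    nlinarith [hq'y.1]

theorem lowerPorous_maskedCantorSet_prod {s t : ℕ → Bool} (hst : ∀ j, s j = false ∨ t j = false) :
    LowerPorous (maskedCantorSet s ×ˢ maskedCantorSet t) := by
  rintro ⟨a, b⟩ ⟨ha, hb⟩
  refine LowerPorousAtWith.lowerPorousAt (c := 1 / 8) (δ := 1) (fun R hR hR1 => ?_)
    (by norm_num) one_pos
  obtain ⟨n, hnR, hRn⟩ := exists_nat_pow_near_of_lt_one hR hR1.le (by norm_num : (0 : ℝ) < 1 / 2)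
    (by norm_num)
  have hρ : 1 / 8 * R ≤ (1 / 2) ^ (n + 1 + 2) := by
    rw [pow_add, pow_add]; linarith
  have hρR : (1 / 2 : ℝ) ^ (n + 1 + 2) ≤ R := by
    rw [pow_add]; nlinarith [pow_pos (by norm_num : (0 : ℝ) < 1 / 2) (n + 1)]
  rcases hst (n + 1) with hs | ht
  · obtain ⟨z, hz⟩ := exists_ball_subset_sdiff_maskedCantorSet hs ha hnR.le
    exact ⟨(z, b), (ball_subset_ball hρ).trans (ball_prod_subset_sdiff_prod_left _ b hρR hz)⟩
  · obtain ⟨z, hz⟩ := exists_ball_subset_sdiff_maskedCantorSet ht hb hnR.le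
    exact ⟨(a, z), (ball_subset_ball hρ).trans (ball_prod_subset_sdiff_prod_right _ a hρR hz)⟩

lemma exists_maskedSum_near {n L : ℕ} (hrun : ∀ j, n ≤ j → j < n + L → t j = true)
    (ε : ℕ → Bool) {y : ℝ}
    (hy : y ∈ Icc (maskedPartialSum t ε n) (maskedPartialSum t ε n + (1 / 2) ^ n)) :
    ∃ ε' : ℕ → Bool, (∀ j < n, ε' j = ε j) ∧ |maskedSum t ε' - y| ≤ (1 / 2) ^ (n + L) := by
  induction L generalizing n ε with
  | zero =>
    refine ⟨ε, fun _ _ => rfl, abs_sub_le_iff.2 ?_⟩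
    have := maskedSum_mem_Icc (t := t) ε n
    rw [add_zero]
    constructor <;> linarith [this.1, this.2, hy.1, hy.2]
  | succ L ih =>
    have hstep (b : Bool) : maskedPartialSum t (Function.update ε n b) (n + 1) =
        maskedPartialSum t ε n + if b then (1 / 2) ^ (n + 1) else 0 := by
      rw [maskedPartialSum, Finset.sum_range_succ, ← maskedPartialSum,
        maskedPartialSum_congr fun j hj => Function.update_of_ne hj.ne _ _, maskedTerm,
        Function.update_self, hrun n le_rfl (by omega), Bool.true_and]
    have hhalf : (1 / 2 : ℝ) ^ (n + 1) = (1 / 2) ^ n / 2 := by rw [pow_succ]; ring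
    obtain ⟨b, hy'⟩ : ∃ b : Bool, y ∈ Icc (maskedPartialSum t (Function.update ε n b) (n + 1))
        (maskedPartialSum t (Function.update ε n b) (n + 1) + (1 / 2) ^ (n + 1)) := by
      by_cases hmid : maskedPartialSum t ε n + (1 / 2) ^ (n + 1) ≤ y
      · refine ⟨true, ?_⟩
        rw [hstep, if_pos rfl]
        constructor <;> linarith [hy.2]
      · refine ⟨false, ?_⟩
        rw [hstep, if_neg Bool.false_ne_true, add_zero]
        constructor <;> linarith [hy.1]
    obtain ⟨ε', hε', hdist⟩ := ih (fun j hj hjL => hrun j (by omega) (by omega)) _ hy'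
    refine ⟨ε', fun j hj => (hε' j (by omega)).trans (Function.update_of_ne hj.ne _ _), ?_⟩
    rwa [show n + 1 + L = n + (L + 1) by omega] at hdist

end MaskedCantor

lemma not_lowerPorousWith_of_forall_exists_near {S : Set ℝ} {p h β c δ : ℝ} (hh : 0 < h)
    (hβh : β ≤ h / 4) (hβc : β < c * h / 4) (hhδ : h < 2 * δ)
    (hnet : ∀ y ∈ Icc p (p + h), ∃ x ∈ S, |x - y| ≤ β) : ¬ LowerPorousWith c δ S := by
  intro hS
  -- The hole at scale `h / 2 - β` around a net point near the midpoint stays inside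
  -- `[p, p + h]`, and it is too wide to miss the net.
  obtain ⟨x, hxS, hx⟩ := hnet (p + h / 2) ⟨by linarith, by linarith⟩
  have hβ : 0 ≤ β := (abs_nonneg _).trans hx
  have hcR : β < c * (h / 2 - β) := by nlinarith
  obtain ⟨z, hz⟩ := hS x hxS (h / 2 - β) (by linarith) (by linarith)
  have hzx : |z - x| < h / 2 - β := (hz (mem_ball_self (by linarith))).1
  rw [abs_sub_le_iff] at hx
  rw [abs_lt] at hzx
  obtain ⟨x', hx'S, hx'⟩ := hnet z ⟨by linarith, by linarith⟩
  exact (hz (show dist x' z < _ from hx'.trans_lt hcR)).2 hx'S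

def HasLongRuns (t : ℕ → Bool) : Prop :=
  ∀ N L : ℕ, ∃ n ≥ N, ∀ j, n ≤ j → j < n + L → t j = true

theorem not_sigmaLowerPorous_maskedCantorSet {t : ℕ → Bool} (ht : HasLongRuns t) :
    ¬ SigmaLowerPorous (maskedCantorSet t) := by
  refine not_sigmaLowerPorous_of_forall_not_lowerPorousWith (isClosed_maskedCantorSet t)
    (range_nonempty _) ?_
  rintro _ ⟨ε₀, rfl⟩ r hr c hc δ hδ S hS
  obtain ⟨L, hL⟩ := exists_pow_lt_of_lt_one (lt_min (by norm_num : (0 : ℝ) < 1 / 4)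
    (by positivity : 0 < c / 4)) (by norm_num : (1 / 2 : ℝ) < 1)
  obtain ⟨N, hN⟩ := exists_pow_lt_of_lt_one (lt_min hr (by positivity : 0 < 2 * δ))
    (by norm_num : (1 / 2 : ℝ) < 1)
  obtain ⟨n, hNn, hrun⟩ := ht N L
  have hn := (pow_le_pow_of_le_one (by norm_num) (by norm_num) hNn).trans_lt hN
  have hβ : (1 / 2 : ℝ) ^ (n + L) = (1 / 2) ^ n * (1 / 2) ^ L := pow_add _ _ _
  have hpos : (0 : ℝ) < (1 / 2) ^ n := by positivity
  refine not_lowerPorousWith_of_forall_exists_near (p := maskedPartialSum t ε₀ n)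
    (β := (1 / 2) ^ (n + L)) hpos ?_ ?_ (hn.trans_le (min_le_right _ _)) fun y hy => ?_
  · rw [hβ]; nlinarith [min_le_left (1 / 4 : ℝ) (c / 4)]
  · rw [hβ]; nlinarith [min_le_right (1 / 4 : ℝ) (c / 4)]
  · obtain ⟨ε, hε, hεy⟩ := exists_maskedSum_near hrun ε₀ hy
    exact ⟨_, hS ⟨⟨ε, rfl⟩, (dist_maskedSum_le hε).trans_lt (hn.trans_le (min_le_left _ _))⟩,
      hεy⟩

lemma hasLongRuns_decide_log {P : ℕ → Prop} [DecidablePred P] (hP : ∀ K, ∃ k ≥ K, P k) :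
    HasLongRuns fun j => decide (P (Nat.log 2 (j + 1))) := by
  intro N L
  obtain ⟨k, hk, hPk⟩ := hP (N + L)
  have hk2 : k < 2 ^ k := Nat.lt_two_pow_self
  refine ⟨2 ^ k - 1, by omega, fun j hj hjL => ?_⟩
  have hlog : Nat.log 2 (j + 1) = k :=
    Nat.log_eq_of_pow_le_of_lt_pow (by omega) (by rw [pow_succ]; omega)
  simpa [hlog] using hPk

/-- There exist closed non-σ-lower porous sets `A, B ⊆ ℝ` whose product is lower
porous in `ℝ²` with the maximum metric. -/
theorem exists_closed_not_sigmaLowerPorous_prod_lowerPorous :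
    ∃ A B : Set ℝ, IsClosed A ∧ IsClosed B ∧
      ¬ SigmaLowerPorous A ∧ ¬ SigmaLowerPorous B ∧ LowerPorous (A ×ˢ B) := by
  let s : ℕ → Bool := fun j => decide (Even (Nat.log 2 (j + 1)))
  let t : ℕ → Bool := fun j => decide (Odd (Nat.log 2 (j + 1)))
  have hs : HasLongRuns s := hasLongRuns_decide_log fun K => ⟨2 * K, by omega, even_two_mul K⟩
  have ht : HasLongRuns t :=
    hasLongRuns_decide_log fun K => ⟨2 * K + 1, by omega, odd_two_mul_add_one K⟩
  have hst : ∀ j, s j = false ∨ t j = false := fun j => by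
    rcases Nat.even_or_odd (Nat.log 2 (j + 1)) with h | h
    · exact Or.inr (by simpa [t] using h)
    · exact Or.inl (by simpa [s] using h)
  exact ⟨_, _, isClosed_maskedCantorSet s, isClosed_maskedCantorSet t,
    not_sigmaLowerPorous_maskedCantorSet hs, not_sigmaLowerPorous_maskedCantorSet ht,
    lowerPorous_maskedCantorSet_prod hst⟩
end
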